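/- Terminal States Similarity: starting from equivalent states s₀ (HIG) and ŝ₀ (DAG), executing the interleaved move a₁ b₁ … aₙ bₙ in the HIG and the corresponding delayed move a₁ … aₙ b₁ … bₙ in the DAG yields similar terminal states: the resulting beliefs are equal, and the DAG's resulting true value lies in the HIG's resulting belief space. -/

import Mathlib

/-- One HIG round: Player-2 action `p.1` updates the belief, Player-1 action `p.2`
(constrained by `β p.1`) updates the true value, and the belief space is updated to
`{Eff₁ b t : b ∈ β p.1, t ∈ Ω}`. -/
def higStep {T U A₁ A₂ : Type*} (Eff₁ : A₁ → T → T) (Eff₂ : A₂ → U → U)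
    (β : A₂ → Set A₁) (s : T × U × Set T) (p : A₂ × A₁) : T × U × Set T :=
  (Eff₁ p.2 s.1, Eff₂ p.1 s.2.1, {t' | ∃ b ∈ β p.1, ∃ t ∈ s.2.2, t' = Eff₁ b t})

/-! The belief evolves under Player-2's actions alone, and the belief space is closed under
every admissible Player-1 response; so replaying the Player-1 actions after all Player-2
actions keeps the true value inside the belief space, round by round. -/

section higStep

variable {T U A₁ A₂ : Type*} (Eff₁ : A₁ → T → T) (Eff₂ : A₂ → U → U) (β : A₂ → Set A₁)

theorem foldl_higStep_belief (ps : List (A₂ × A₁)) (s : T × U × Set T) :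
    (ps.foldl (higStep Eff₁ Eff₂ β) s).2.1 =
      (ps.map Prod.fst).foldl (fun u a => Eff₂ a u) s.2.1 := by
  induction ps generalizing s with
  | nil => rfl
  | cons p ps ih => exact ih (higStep Eff₁ Eff₂ β s p)

theorem mem_higStep_beliefSpace {s : T × U × Set T} {t : T} (ht : t ∈ s.2.2)
    {a : A₂} {b : A₁} (hb : b ∈ β a) : Eff₁ b t ∈ (higStep Eff₁ Eff₂ β s (a, b)).2.2 :=
  ⟨b, hb, t, ht, rfl⟩

theorem foldl_mem_foldl_higStep_beliefSpace {ps : List (A₂ × A₁)}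
    (hβ : ∀ p ∈ ps, p.2 ∈ β p.1) {s : T × U × Set T} {t : T} (ht : t ∈ s.2.2) :
    (ps.map Prod.snd).foldl (fun t b => Eff₁ b t) t ∈ (ps.foldl (higStep Eff₁ Eff₂ β) s).2.2 := by
  induction ps generalizing s t with
  | nil => exact ht
  | cons p ps ih =>
    rw [List.forall_mem_cons] at hβ
    exact ih hβ.2 (mem_higStep_beliefSpace Eff₁ Eff₂ β ht hβ.1)

end higStep

/-- Terminal States Similarity: starting from equivalent states (same true value `t₀`,
same belief `u₀`, belief space `{t₀}`), the delayed DAG execution ends in a state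
similar to the HIG terminal state: equal beliefs, and the DAG true value lies in the
HIG belief space. -/
theorem terminal_states_similarity {T U A₁ A₂ : Type*}
    (Eff₁ : A₁ → T → T) (Eff₂ : A₂ → U → U) (β : A₂ → Set A₁)
    (ps : List (A₂ × A₁)) (hβ : ∀ p ∈ ps, p.2 ∈ β p.1)
    (t₀ : T) (u₀ : U) :
    (ps.map Prod.fst).foldl (fun u a => Eff₂ a u) u₀
        = (ps.foldl (higStep Eff₁ Eff₂ β) (t₀, u₀, {t₀})).2.1 ∧
    (ps.map Prod.snd).foldl (fun t b => Eff₁ b t) t₀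
        ∈ (ps.foldl (higStep Eff₁ Eff₂ β) (t₀, u₀, {t₀})).2.2 :=
  ⟨(foldl_higStep_belief Eff₁ Eff₂ β ps (t₀, u₀, {t₀})).symm,
    foldl_mem_foldl_higStep_beliefSpace Eff₁ Eff₂ β hβ rfl⟩
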